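/- Let D, h, Γ, k > 0. Over all (x, θ) ∈ [0, D] × ℝ, the function P(x, θ) = 1/D² + Γ²/d(x)² + (2Γ/(d(x)D))cos(k·d(x) − θ − kD), where d(x) = √(x² + h²) + √((D − x)² + h²), attains its global maximum at x* = D/2 and θ* = k(2√(h² + D²/4) − D), with maximum value 1/D² + Γ²/d_min² + 2Γ/(d_min D) where d_min = 2√(h² + D²/4). -/
import Mathlib


open Real Set

theorem joint_opt (D h Γ k : ℝ) (hD : 0 < D) (hh : 0 < h) (hΓ : 0 < Γ) (hk : 0 < k) :
    (∀ x ∈ Set.Icc (0 : ℝ) D, ∀ θ : ℝ,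
      1 / D ^ 2 + Γ ^ 2 / (Real.sqrt (x ^ 2 + h ^ 2) + Real.sqrt ((D - x) ^ 2 + h ^ 2)) ^ 2
        + (2 * Γ / ((Real.sqrt (x ^ 2 + h ^ 2) + Real.sqrt ((D - x) ^ 2 + h ^ 2)) * D))
          * Real.cos (k * (Real.sqrt (x ^ 2 + h ^ 2) + Real.sqrt ((D - x) ^ 2 + h ^ 2)) - θ - k * D)
      ≤ 1 / D ^ 2 + Γ ^ 2 / (2 * Real.sqrt (h ^ 2 + D ^ 2 / 4)) ^ 2
        + 2 * Γ / (2 * Real.sqrt (h ^ 2 + D ^ 2 / 4) * D))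
    ∧ (1 / D ^ 2
        + Γ ^ 2 / (Real.sqrt ((D / 2) ^ 2 + h ^ 2) + Real.sqrt ((D - D / 2) ^ 2 + h ^ 2)) ^ 2
        + (2 * Γ / ((Real.sqrt ((D / 2) ^ 2 + h ^ 2) + Real.sqrt ((D - D / 2) ^ 2 + h ^ 2)) * D))
          * Real.cos (k * (Real.sqrt ((D / 2) ^ 2 + h ^ 2) + Real.sqrt ((D - D / 2) ^ 2 + h ^ 2))
              - (k * (2 * Real.sqrt (h ^ 2 + D ^ 2 / 4) - D)) - k * D)
      = 1 / D ^ 2 + Γ ^ 2 / (2 * Real.sqrt (h ^ 2 + D ^ 2 / 4)) ^ 2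
        + 2 * Γ / (2 * Real.sqrt (h ^ 2 + D ^ 2 / 4) * D)) := by
  have hs : 0 < Real.sqrt (h ^ 2 + D ^ 2 / 4) := Real.sqrt_pos.mpr (by positivity)
  set s := Real.sqrt (h ^ 2 + D ^ 2 / 4) with hsdef
  have hs2 : s ^ 2 = h ^ 2 + D ^ 2 / 4 := Real.sq_sqrt (by positivity)
  constructor
  · intro x hx θ
    obtain ⟨hx0, hxD⟩ := hx
    set A := Real.sqrt (x ^ 2 + h ^ 2) with hA
    set B := Real.sqrt ((D - x) ^ 2 + h ^ 2) with hB
    have hA0 : 0 < A := Real.sqrt_pos.mpr (by positivity)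
    have hB0 : 0 < B := Real.sqrt_pos.mpr (by positivity)
    have hA2 : A ^ 2 = x ^ 2 + h ^ 2 := Real.sq_sqrt (by positivity)
    have hB2 : B ^ 2 = (D - x) ^ 2 + h ^ 2 := Real.sq_sqrt (by positivity)
    -- A*B ≥ x*(D-x) + h^2
    have hAB : x * (D - x) + h ^ 2 ≤ A * B := by
      have h1 : (x * (D - x) + h ^ 2) ^ 2 ≤ (A * B) ^ 2 := by
        have : (A * B) ^ 2 = (x ^ 2 + h ^ 2) * ((D - x) ^ 2 + h ^ 2) := by
          rw [mul_pow, hA2, hB2]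
        nlinarith [sq_nonneg (x * h - (D - x) * h)]
      have h2 : 0 ≤ x * (D - x) + h ^ 2 := by nlinarith
      nlinarith [mul_pos hA0 hB0]
    have hdm : 2 * s ≤ A + B := by
      nlinarith [mul_pos hA0 hB0, hs, hA0, hB0, hs2, hA2, hB2, hAB]
    have hds : 0 < 2 * s := by positivity
    have hd : 0 < A + B := by linarith
    have t2 : Γ ^ 2 / (A + B) ^ 2 ≤ Γ ^ 2 / (2 * s) ^ 2 := by
      gcongr

    have t3 : (2 * Γ / ((A + B) * D)) * Real.cos (k * (A + B) - θ - k * D)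
        ≤ 2 * Γ / (2 * s * D) := by
      have hc := Real.cos_le_one (k * (A + B) - θ - k * D)
      have h1 : (2 * Γ / ((A + B) * D)) * Real.cos (k * (A + B) - θ - k * D)
          ≤ 2 * Γ / ((A + B) * D) :=
        mul_le_of_le_one_right (by positivity) hc
      have h2 : 2 * Γ / ((A + B) * D) ≤ 2 * Γ / (2 * s * D) := by
        gcongr

      linarith
    linarith
  · have hhalf : Real.sqrt ((D / 2) ^ 2 + h ^ 2) = s := by
      rw [hsdef]; congr 1; ring
    have hD2 : D - D / 2 = D / 2 := by ring
    rw [hD2, hhalf]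
    have hcos : Real.cos (k * (s + s) - (k * (2 * s - D)) - k * D) = 1 := by
      have : k * (s + s) - (k * (2 * s - D)) - k * D = 0 := by ring
      rw [this, Real.cos_zero]
    rw [hcos]
    have : s + s = 2 * s := by ring
    rw [this, mul_one]
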